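/- Consider the three-state ensemble in ℂ² given by ψ₁ = (√3/2, 1/2), ψ₂ = (√3/2, −1/2), ψ₃ = (1, 0), with priors p₁ = p₂ = 4/(11 + √3) and p₃ = 1 − 2p₁. Then the failure rate of Holevo's quadratically weighted measurement strictly exceeds that of the pretty good measurement: 1 − Σ_k p_k ⟨ψ_k, M_k^{Hol} ψ_k⟩ > 1 − Σ_k p_k ⟨ψ_k, M_k^{PGM} ψ_k⟩, where M_k^{Hol} is the Belavkin weighted square-root measurement with weights W_k = p_k² and M_k^{PGM} is the one with weights W_k = p_k. (Numerically, P_fail^Holevo ≈ 0.4245 > P_fail^PGM ≈ 0.4224.) -/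

import Mathlib

open Matrix Filter
open scoped ComplexOrder

noncomputable section

/-- The rank-one projector `|ψ⟩⟨ψ|` as a matrix. -/
def proj {d : ℕ} (ψ : Fin d → ℂ) : Matrix (Fin d) (Fin d) ℂ := vecMulVec ψ (star ψ)

/-- The (real) expectation value `⟨ψ, M ψ⟩`. -/
def expVal {d : ℕ} (M : Matrix (Fin d) (Fin d) ℂ) (ψ : Fin d → ℂ) : ℝ :=
  (star ψ ⬝ᵥ M *ᵥ ψ).re

/-- A POVM: a finite family of PSD matrices summing to the identity. -/
def IsPOVM {d m : ℕ} (M : Fin m → Matrix (Fin d) (Fin d) ℂ) : Prop :=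
  (∀ k, (M k).PosSemidef) ∧ ∑ k, M k = 1

/-- The positive semidefinite square root of a positive semidefinite matrix
(the definition `Matrix.PosSemidef.sqrt` of the older Mathlib, since removed). -/
def Matrix.PosSemidef.sqrt {n 𝕜 : Type*} [Fintype n] [DecidableEq n] [RCLike 𝕜]
    {A : Matrix n n 𝕜} (hA : A.PosSemidef) : Matrix n n 𝕜 :=
  hA.1.eigenvectorUnitary.1 * diagonal ((↑) ∘ (√·) ∘ hA.1.eigenvalues) *
  (star hA.1.eigenvectorUnitary : Matrix n n 𝕜)

/-! By the reflection symmetry `ψ₁ ↔ ψ₂`, every weighted Gram matrix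
`S = w₁ (|ψ₁⟩⟨ψ₁| + |ψ₂⟩⟨ψ₂|) + w₃ |ψ₃⟩⟨ψ₃|` is diagonal, `S = diag (3 w₁ / 2 + w₃, w₁ / 2)`,
so `S^{-1/2}` is explicit and the success probability `∑ₖ pₖ Wₖ ⟨ψₖ, S^{-1/2} ψₖ⟩²` of the
weighted square-root measurement has the closed form `srmSuccess p₁ p₃ w₁ w₃`. For `W = p` and
`W = p²` the two closed forms differ by about `0.002` uniformly for `p₁ ∈ (0.3125, 0.315)`, an
interval which `√3 ∈ (1.7, 1.8)` already places `p₁ = 4 / (11 + √3)` in. -/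

open scoped MatrixOrder

namespace Matrix.PosSemidef

variable {n 𝕜 : Type*} [Fintype n] [DecidableEq n] [RCLike 𝕜]

theorem sqrt_eq_cfcSqrt {A : Matrix n n 𝕜} (hA : A.PosSemidef) : hA.sqrt = CFC.sqrt A := by
  rw [CFC.sqrt_eq_cfc, cfc_nnreal_eq_real _ A (nonneg_iff_posSemidef.mpr hA), hA.1.cfc_eq]
  simp only [Matrix.PosSemidef.sqrt, IsHermitian.cfc, Unitary.conjStarAlgAut_apply, Real.sqrt]

theorem sqrt_eq_diagonal {A : Matrix n n 𝕜} (hA : A.PosSemidef) {d : n → ℝ} (hd : ∀ i, 0 ≤ d i)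
    (hAd : A = diagonal fun i => (d i : 𝕜)) : hA.sqrt = diagonal fun i => (√(d i) : 𝕜) := by
  rw [sqrt_eq_cfcSqrt]
  refine CFC.sqrt_unique ?_ (nonneg_iff_posSemidef.mpr (posSemidef_diagonal_iff.mpr fun i => ?_))
  · rw [diagonal_mul_diagonal, hAd]
    congr 1
    funext i
    rw [← RCLike.ofReal_mul, Real.mul_self_sqrt (hd i)]
  · exact RCLike.ofReal_nonneg.mpr (Real.sqrt_nonneg _)

theorem inv_sqrt_eq_diagonal {A : Matrix n n 𝕜} (hA : A.PosSemidef) {d : n → ℝ}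
    (hd : ∀ i, 0 < d i) (hAd : A = diagonal fun i => (d i : 𝕜)) :
    hA.sqrt⁻¹ = diagonal fun i => (((√(d i))⁻¹ : ℝ) : 𝕜) := by
  rw [hA.sqrt_eq_diagonal (fun i => (hd i).le) hAd]
  refine inv_eq_right_inv ?_
  rw [diagonal_mul_diagonal, ← diagonal_one]
  congr 1
  funext i
  rw [← RCLike.ofReal_mul, mul_inv_cancel₀ (Real.sqrt_pos.mpr (hd i)).ne', RCLike.ofReal_one]

end Matrix.PosSemidef

theorem expVal_mul_smul_proj_mul {d : ℕ} {D : Matrix (Fin d) (Fin d) ℂ} (hD : D.IsHermitian)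
    (w : ℝ) (ψ : Fin d → ℂ) : expVal (D * (w • proj ψ) * D) ψ = w * expVal D ψ ^ 2 := by
  have hreal : ((star ψ ⬝ᵥ D *ᵥ ψ).re : ℂ) = star ψ ⬝ᵥ D *ᵥ ψ :=
    Complex.ext rfl (hD.im_star_dotProduct_mulVec_self ψ).symm
  simp only [expVal, proj, Matrix.mul_smul, Matrix.smul_mul, mul_vecMulVec, vecMulVec_mul,
    smul_mulVec, vecMulVec_mulVec, ← dotProduct_mulVec, op_smul_eq_smul, dotProduct_smul]
  rw [← hreal]
  simp only [Complex.real_smul, smul_eq_mul, ← Complex.ofReal_mul, Complex.ofReal_re]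
  ring

theorem expVal_diagonal {d : ℕ} (x : Fin d → ℝ) (ψ : Fin d → ℂ) :
    expVal (diagonal fun i => (x i : ℂ)) ψ = ∑ i, x i * ‖ψ i‖ ^ 2 := by
  simp only [expVal, dotProduct, mulVec_diagonal, Complex.re_sum, Complex.sq_norm,
    Complex.normSq_apply, Pi.star_apply, Complex.star_def, Complex.mul_re, Complex.conj_re,
    Complex.conj_im, Complex.im_ofReal_mul, Complex.ofReal_re, Complex.ofReal_im]
  refine Finset.sum_congr rfl fun i _ => by ring

def srmSuccess (p₁ p₃ w₁ w₃ : ℝ) : ℝ :=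
  p₁ / 4 + (9 / 8 * p₁ * w₁ + p₃ * w₃) / (3 / 2 * w₁ + w₃)
    + 3 / 4 * p₁ * √(2 * w₁ / (3 / 2 * w₁ + w₃))

theorem sum_sq_eq_srmSuccess (p₁ p₃ : ℝ) {w₁ w₃ : ℝ} (ha : 0 < 3 / 2 * w₁ + w₃)
    (hb : 0 < w₁ / 2) :
    2 * p₁ * w₁ * (3 / 4 * (√(3 / 2 * w₁ + w₃))⁻¹ + 1 / 4 * (√(w₁ / 2))⁻¹) ^ 2
      + p₃ * w₃ * (√(3 / 2 * w₁ + w₃))⁻¹ ^ 2 = srmSuccess p₁ p₃ w₁ w₃ := by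
  have hroot : √(2 * w₁ / (3 / 2 * w₁ + w₃)) = 2 * √(w₁ / 2) / √(3 / 2 * w₁ + w₃) := by
    rw [Real.sqrt_div' _ ha.le, show 2 * w₁ = 2 ^ 2 * (w₁ / 2) by ring, Real.sqrt_mul' _ hb.le,
      Real.sqrt_sq zero_le_two]
  have hsa := Real.sq_sqrt ha.le
  have hsb := Real.sq_sqrt hb.le
  have hsa0 := Real.sqrt_pos.mpr ha
  have hsb0 := Real.sqrt_pos.mpr hb
  rw [srmSuccess, hroot]
  generalize √(3 / 2 * w₁ + w₃) = sa at *
  generalize √(w₁ / 2) = sb at *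
  obtain rfl : w₁ = 2 * sb ^ 2 := by linarith
  obtain rfl : w₃ = sa ^ 2 - 3 * sb ^ 2 := by linarith
  field_simp
  ring

theorem srmSuccess_sq_lt_srmSuccess {p : ℝ} (hlo : 0.3125 < p) (hhi : p < 0.315) :
    srmSuccess p (1 - 2 * p) (p ^ 2) ((1 - 2 * p) ^ 2)
      < srmSuccess p (1 - 2 * p) p (1 - 2 * p) := by
  have haP : 0 < 3 / 2 * p + (1 - 2 * p) := by linarith
  have haH : 0 < 3 / 2 * p ^ 2 + (1 - 2 * p) ^ 2 := by positivity
  have hrootP : 0.86 < √(2 * p / (3 / 2 * p + (1 - 2 * p))) := by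
    rw [Real.lt_sqrt (by norm_num), lt_div_iff₀ haP]
    linarith
  have hrootH : √(2 * p ^ 2 / (3 / 2 * p ^ 2 + (1 - 2 * p) ^ 2)) < 2.65 * p := by
    have hcoef : 2 < 2.65 ^ 2 * (3 / 2 * p ^ 2 + (1 - 2 * p) ^ 2) := by nlinarith
    rw [Real.sqrt_lt' (by linarith), div_lt_iff₀ haH]
    nlinarith [mul_lt_mul_of_pos_left hcoef (pow_pos (by linarith : (0 : ℝ) < p) 2)]
  have hrat :
      (9 / 8 * p * p ^ 2 + (1 - 2 * p) * (1 - 2 * p) ^ 2) / (3 / 2 * p ^ 2 + (1 - 2 * p) ^ 2)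
          + 3 / 4 * p * (2.65 * p)
        < (9 / 8 * p * p + (1 - 2 * p) * (1 - 2 * p)) / (3 / 2 * p + (1 - 2 * p))
          + 3 / 4 * p * 0.86 := by
    rw [div_add' _ _ _ haH.ne', div_add' _ _ _ haP.ne', div_lt_div_iff₀ haH haP]
    have h1 := sub_pos.mpr hlo
    have h2 := sub_pos.mpr hhi
    nlinarith [mul_pos h1 h2, mul_pos (mul_pos h1 h2) h1, mul_pos (mul_pos h1 h2) h2]
  have hp : 0 < 3 / 4 * p := by linarith
  unfold srmSuccess
  linarith [mul_lt_mul_of_pos_left hrootH hp, mul_lt_mul_of_pos_left hrootP hp]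

section ThreeStates

local notation "ψ₊" => ![(√3 / 2 : ℂ), (1/2 : ℂ)]
local notation "ψ₋" => ![(√3 / 2 : ℂ), (-(1/2) : ℂ)]
local notation "ψ₀" => (![1, 0] : Fin 2 → ℂ)

theorem gram_eq_diagonal (w₁ w₃ : ℝ) :
    w₁ • proj ψ₊ + w₁ • proj ψ₋ + w₃ • proj ψ₀
      = diagonal fun i => ((![3 / 2 * w₁ + w₃, w₁ / 2] i : ℝ) : ℂ) := by
  have h3 : (√3 : ℂ) * (√3 : ℂ) = 3 := by
    rw [← Complex.ofReal_mul, Real.mul_self_sqrt (by norm_num)]; norm_num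
  ext i j
  fin_cases i <;> fin_cases j <;>
    simp [proj, vecMulVec, Complex.conj_ofReal, map_ofNat, Complex.real_smul, div_mul_div_comm,
      h3] <;> ring

theorem success_eq_srmSuccess (p₁ p₃ w₁ w₃ : ℝ)
    (hS : (w₁ • proj ψ₊ + w₁ • proj ψ₋ + w₃ • proj ψ₀).PosDef) :
    p₁ * expVal (hS.posSemidef.sqrt⁻¹ * (w₁ • proj ψ₊) * hS.posSemidef.sqrt⁻¹) ψ₊
      + p₁ * expVal (hS.posSemidef.sqrt⁻¹ * (w₁ • proj ψ₋) * hS.posSemidef.sqrt⁻¹) ψ₋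
      + p₃ * expVal (hS.posSemidef.sqrt⁻¹ * (w₃ • proj ψ₀) * hS.posSemidef.sqrt⁻¹) ψ₀
    = srmSuccess p₁ p₃ w₁ w₃ := by
  have hd : ∀ i : Fin 2, 0 < ![3 / 2 * w₁ + w₃, w₁ / 2] i := by
    have h := hS
    rw [gram_eq_diagonal, posDef_diagonal_iff] at h
    exact fun i => Complex.zero_lt_real.mp (h i)
  have hR : hS.posSemidef.sqrt⁻¹
      = diagonal fun i => (((√(![3 / 2 * w₁ + w₃, w₁ / 2] i))⁻¹ : ℝ) : ℂ) :=
    hS.posSemidef.inv_sqrt_eq_diagonal hd (gram_eq_diagonal w₁ w₃)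
  have hRherm : hS.posSemidef.sqrt⁻¹.IsHermitian := by
    rw [hR]
    exact isHermitian_diagonal_iff.mpr fun i => Complex.conj_ofReal _
  simp only [expVal_mul_smul_proj_mul hRherm]
  rw [hR]
  have hn : ‖(√3 / 2 : ℂ)‖ ^ 2 = 3 / 4 := by
    rw [norm_div, Complex.norm_real, Real.norm_of_nonneg (Real.sqrt_nonneg 3), div_pow,
      Real.sq_sqrt (by norm_num)]
    norm_num
  have hhalf : ‖(1 / 2 : ℂ)‖ ^ 2 = 1 / 4 := by norm_num
  simp only [expVal_diagonal, Fin.sum_univ_two, cons_val_zero, cons_val_one, hn, hhalf, norm_neg,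
    norm_one, norm_zero]
  rw [← sum_sq_eq_srmSuccess p₁ p₃ (hd 0) (hd 1)]
  ring

end ThreeStates

/-- for the three-state ensemble ψ₁ = (√3/2, 1/2), ψ₂ = (√3/2, −1/2),
ψ₃ = (1,0) with priors p₁ = p₂ = 4/(11+√3), p₃ = 1 − 2p₁, the failure rate of Holevo's
quadratically weighted measurement strictly exceeds that of the pretty good measurement. -/
theorem holevo_worse_than_pgm_three_states
    (ψ₁ ψ₂ ψ₃ : Fin 2 → ℂ)
    (hψ1 : ψ₁ = ![(Real.sqrt 3 / 2 : ℂ), (1/2 : ℂ)])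
    (hψ2 : ψ₂ = ![(Real.sqrt 3 / 2 : ℂ), (-(1/2) : ℂ)])
    (hψ3 : ψ₃ = ![1, 0])
    (p₁ p₂ p₃ : ℝ)
    (hp1 : p₁ = 4 / (11 + Real.sqrt 3)) (hp2 : p₂ = p₁) (hp3 : p₃ = 1 - 2 * p₁)
    (hSH : (p₁^2 • proj ψ₁ + p₂^2 • proj ψ₂ + p₃^2 • proj ψ₃).PosDef)
    (hSP : (p₁ • proj ψ₁ + p₂ • proj ψ₂ + p₃ • proj ψ₃).PosDef)
    (H₁ H₂ H₃ G₁ G₂ G₃ : Matrix (Fin 2) (Fin 2) ℂ)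
    (hH1 : H₁ = (hSH.posSemidef.sqrt)⁻¹ * (p₁^2 • proj ψ₁) * (hSH.posSemidef.sqrt)⁻¹)
    (hH2 : H₂ = (hSH.posSemidef.sqrt)⁻¹ * (p₂^2 • proj ψ₂) * (hSH.posSemidef.sqrt)⁻¹)
    (hH3 : H₃ = (hSH.posSemidef.sqrt)⁻¹ * (p₃^2 • proj ψ₃) * (hSH.posSemidef.sqrt)⁻¹)
    (hG1 : G₁ = (hSP.posSemidef.sqrt)⁻¹ * (p₁ • proj ψ₁) * (hSP.posSemidef.sqrt)⁻¹)
    (hG2 : G₂ = (hSP.posSemidef.sqrt)⁻¹ * (p₂ • proj ψ₂) * (hSP.posSemidef.sqrt)⁻¹)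
    (hG3 : G₃ = (hSP.posSemidef.sqrt)⁻¹ * (p₃ • proj ψ₃) * (hSP.posSemidef.sqrt)⁻¹) :
    1 - (p₁ * expVal H₁ ψ₁ + p₂ * expVal H₂ ψ₂ + p₃ * expVal H₃ ψ₃)
      > 1 - (p₁ * expVal G₁ ψ₁ + p₂ * expVal G₂ ψ₂ + p₃ * expVal G₃ ψ₃) := by
  subst ψ₁ ψ₂ ψ₃ p₂ H₁ H₂ H₃ G₁ G₂ G₃
  rw [success_eq_srmSuccess p₁ p₃ (p₁ ^ 2) (p₃ ^ 2) hSH, success_eq_srmSuccess p₁ p₃ p₁ p₃ hSP,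
    hp3]
  have hsqrt3_lo : (1.7 : ℝ) < √3 := (Real.lt_sqrt (by norm_num)).mpr (by norm_num)
  have hsqrt3_hi : √3 < 1.8 := (Real.sqrt_lt' (by norm_num)).mpr (by norm_num)
  have hlo : 0.3125 < p₁ := by rw [hp1, lt_div_iff₀ (by positivity)]; linarith
  have hhi : p₁ < 0.315 := by rw [hp1, div_lt_iff₀ (by positivity)]; linarith
  linarith [srmSuccess_sq_lt_srmSuccess hlo hhi]
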